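/- arXiv:1812.10618 — 4 statements merged into one kernel-verified Lean document; each statement's English description precedes it below -/
import Mathlib

section
/- Let T be a Tychonoff (T3.5) topological space, let 𝒰 be an ω-ultrafilter on T, and let A and B be zero sets of T. If A ∪ B ∈ 𝒰, then A ∈ 𝒰 or B ∈ 𝒰. -/
/-- A zero set of a topological space `T` is a set of the form `f ⁻¹' {0}` for some
bounded continuous function `f : T → ℝ`. -/
def IsZeroSet {T : Type*} [TopologicalSpace T] (Z : Set T) : Prop :=
  ∃ f : BoundedContinuousFunction T ℝ, Z = f ⁻¹' {0}

/-- The finite intersection property: every nonempty finite subfamily has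
nonempty intersection. -/
def HasFIP {T : Type*} (𝒰 : Set (Set T)) : Prop :=
  ∀ S : Set (Set T), S ⊆ 𝒰 → S.Finite → S.Nonempty → (⋂₀ S).Nonempty

/-- An ω-ultrafilter on `T` is a family of zero sets with the finite intersection
property which is maximal (among families of zero sets) with this property. -/
def IsOmegaUltrafilter {T : Type*} [TopologicalSpace T] (𝒰 : Set (Set T)) : Prop :=
  (∀ A ∈ 𝒰, IsZeroSet A) ∧ HasFIP 𝒰 ∧
    ∀ 𝒱 : Set (Set T), (∀ A ∈ 𝒱, IsZeroSet A) → HasFIP 𝒱 → 𝒰 ⊆ 𝒱 → 𝒱 = 𝒰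

lemma hasFIP_insert {T : Type*} {𝒰 : Set (Set T)} {A : Set T}
    (h : ∀ F ⊆ 𝒰, F.Finite → (⋂₀ F ∩ A).Nonempty) : HasFIP (insert A 𝒰) := by
  intro S hS hSfin _
  have hSA : S \ {A} ⊆ 𝒰 := fun X ⟨hXS, hXA⟩ => (hS hXS).resolve_left hXA
  obtain ⟨x, hxF, hxA⟩ := h (S \ {A}) hSA hSfin.sdiff
  refine ⟨x, fun X hXS => ?_⟩
  by_cases hXA : X = A
  · exact hXA ▸ hxA
  · exact hxF X ⟨hXS, hXA⟩

lemma HasFIP.sInter_inter_nonempty {T : Type*} {𝒰 F : Set (Set T)} {C : Set T}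
    (h : HasFIP 𝒰) (hF : F ⊆ 𝒰) (hFfin : F.Finite) (hC : C ∈ 𝒰) :
    (⋂₀ F ∩ C).Nonempty := by
  have := h (insert C F) (Set.insert_subset hC hF) (hFfin.insert C) (Set.insert_nonempty C F)
  rwa [Set.sInter_insert, Set.inter_comm] at this

lemma IsOmegaUltrafilter.exists_finite_disjoint_of_notMem {T : Type*} [TopologicalSpace T]
    {𝒰 : Set (Set T)} (h𝒰 : IsOmegaUltrafilter 𝒰) {A : Set T} (hA : IsZeroSet A)
    (hA𝒰 : A ∉ 𝒰) : ∃ F ⊆ 𝒰, F.Finite ∧ Disjoint (⋂₀ F) A := by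
  by_contra! hmeet
  simp only [Set.not_disjoint_iff_nonempty_inter] at hmeet
  have hzero : ∀ X ∈ insert A 𝒰, IsZeroSet X := by
    rintro X (rfl | hX)
    exacts [hA, h𝒰.1 X hX]
  have := h𝒰.2.2 _ hzero (hasFIP_insert hmeet) (Set.subset_insert A 𝒰)
  exact hA𝒰 (this ▸ Set.mem_insert A 𝒰)

theorem union_mem_omegaUltrafilter_general {T : Type*} [TopologicalSpace T]
    (𝒰 : Set (Set T)) (h𝒰 : IsOmegaUltrafilter 𝒰) (A B : Set T)
    (hA : IsZeroSet A) (hB : IsZeroSet B) (hAB : A ∪ B ∈ 𝒰) :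
    A ∈ 𝒰 ∨ B ∈ 𝒰 := by
  by_contra! h
  obtain ⟨FA, hFA, hFAfin, hFA_disj⟩ := h𝒰.exists_finite_disjoint_of_notMem hA h.1
  obtain ⟨FB, hFB, hFBfin, hFB_disj⟩ := h𝒰.exists_finite_disjoint_of_notMem hB h.2
  obtain ⟨x, hx, hxAB⟩ :=
    h𝒰.2.1.sInter_inter_nonempty (Set.union_subset hFA hFB) (hFAfin.union hFBfin) hAB
  rw [Set.sInter_union] at hx
  rcases hxAB with hxA | hxB
  · exact Set.disjoint_left.mp hFA_disj hx.1 hxA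
  · exact Set.disjoint_left.mp hFB_disj hx.2 hxB

/-- If the union of two zero sets belongs to an ω-ultrafilter, then one of them does. -/
theorem union_mem_omegaUltrafilter {T : Type*} [TopologicalSpace T] [T35Space T]
    (𝒰 : Set (Set T)) (h𝒰 : IsOmegaUltrafilter 𝒰) (A B : Set T)
    (hA : IsZeroSet A) (hB : IsZeroSet B) (hAB : A ∪ B ∈ 𝒰) :
    A ∈ 𝒰 ∨ B ∈ 𝒰 :=
  union_mem_omegaUltrafilter_general 𝒰 h𝒰 A B hA hB hAB
end

section
/- (Arzelà–Ascoli theorem via the Wallman/Stone–Čech compactification.) Let T be a Tychonoff (T3.5) topological space. A family ℱ ⊆ C^b(T) is relatively compact in C^b(T) (with the supremum norm) if and only if both of the following hold: (AA1) ℱ is pointwise bounded, i.e. for every t ∈ T the set {f(t) : f ∈ ℱ} ⊆ ℂ is bounded; and (AA2) ℱ is ω-equicontinuous, i.e. for every ε > 0 and every u ∈ βT there exists an open set W ⊆ βT with u ∈ W such that |f(t) − f̂(u)| < ε for every f ∈ ℱ and every t ∈ T with φ(t) ∈ W. -/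
/-!
Because `φ(T)` is dense in `βT`, the extension map `f ↦ f̂` is an isometry of `C^b(T)` into
`C(βT)`; both spaces are complete, so `ℱ` is relatively compact iff `{f̂ | f ∈ ℱ}` is. On the
compact space `βT` the classical Arzelà–Ascoli theorem applies. Condition (AA2) is
equicontinuity of the `f̂` tested on the dense set `φ(T)` only, and given equicontinuity,
boundedness at the points of `φ(T)` already gives boundedness at every point of `βT`.
-/

open BoundedContinuousFunction Set Filter Topology Bornology Metric

theorem DenseRange.isometry_of_extension {T K β : Type*} [TopologicalSpace T]
    [TopologicalSpace K] [PseudoMetricSpace β] {φ : T → K} (hφ : DenseRange φ)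
    {e : (T →ᵇ β) → (K →ᵇ β)} (he : ∀ f t, e f (φ t) = f t) : Isometry e := by
  refine Isometry.of_dist_eq fun f g => le_antisymm ?_ ?_
  · refine (dist_le dist_nonneg).2 fun x => hφ.induction_on x ?_ fun t => ?_
    · exact isClosed_le ((e f).continuous.dist (e g).continuous) continuous_const
    · simpa only [he] using dist_coe_le_dist t
  · refine (dist_le dist_nonneg).2 fun t => ?_
    simpa only [he] using dist_coe_le_dist (f := e f) (g := e g) (φ t)

theorem isCompact_closure_iff_totallyBounded {α : Type*} [UniformSpace α] [CompleteSpace α]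
    {s : Set α} : IsCompact (closure s) ↔ TotallyBounded s :=
  ⟨fun h => h.totallyBounded.subset subset_closure,
    fun h => h.closure.isCompact_of_isClosed isClosed_closure⟩

theorem IsUniformInducing.isCompact_closure_image_iff {α γ : Type*} [UniformSpace α]
    [UniformSpace γ] [CompleteSpace α] [CompleteSpace γ] {e : α → γ} (he : IsUniformInducing e)
    {s : Set α} : IsCompact (closure (e '' s)) ↔ IsCompact (closure s) := by
  rw [isCompact_closure_iff_totallyBounded, isCompact_closure_iff_totallyBounded,
    totallyBounded_image_iff he]

theorem BoundedContinuousFunction.equicontinuous_of_totallyBounded_range {ι X β : Type*}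
    [TopologicalSpace X] [PseudoMetricSpace β] {F : ι → X →ᵇ β} (hF : TotallyBounded (range F)) :
    Equicontinuous fun i => ⇑(F i) := by
  intro x₀
  rw [equicontinuousAt_iff_right]
  intro ε hε
  obtain ⟨N, hN, hcover⟩ := totallyBounded_iff.1 hF (ε / 3) (by positivity)
  have hnear : ∀ᶠ x in 𝓝 x₀, ∀ g ∈ N, dist (g x) (g x₀) < ε / 3 :=
    (eventually_all_finite hN).2 fun g _ =>
      tendsto_nhds.1 (g.continuous.tendsto x₀) _ (by positivity)
  filter_upwards [hnear] with x hx i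
  obtain ⟨g, hg, hFg⟩ := mem_iUnion₂.1 (hcover (mem_range_self i))
  have hFg' := mem_ball.1 hFg
  calc dist (F i x₀) (F i x)
      ≤ dist (F i x₀) (g x₀) + dist (g x₀) (g x) + dist (g x) (F i x) := dist_triangle4 _ _ _ _
    _ < ε / 3 + ε / 3 + ε / 3 := by
        gcongr
        · exact (dist_coe_le_dist x₀).trans_lt hFg'
        · exact dist_comm (g x) _ ▸ hx g hg
        · exact (dist_comm (F i x) _ ▸ dist_coe_le_dist x).trans_lt hFg'
    _ = ε := by ring

theorem Equicontinuous.isBounded_iUnion_range {ι X β : Type*} [TopologicalSpace X]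
    [CompactSpace X] [PseudoMetricSpace β] {F : ι → X → β} (hF : Equicontinuous F)
    (hb : ∀ x, IsBounded (range fun i => F i x)) : IsBounded (⋃ i, range (F i)) := by
  obtain ⟨t, -, ht⟩ := isCompact_univ.elim_nhds_subcover
    (fun x => {y | ∀ i, dist (F i x) (F i y) < 1})
    (fun x _ => equicontinuousAt_iff_right.1 (hF x) 1 one_pos)
  refine ((isBounded_biUnion_finset t).2 fun x _ => (hb x).thickening (δ := 1)).subset ?_
  intro z hz
  obtain ⟨i, y, rfl⟩ := mem_iUnion.1 hz
  obtain ⟨x, hx, hy⟩ := mem_iUnion₂.1 (ht (mem_univ y))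
  exact mem_iUnion₂.2
    ⟨x, hx, mem_thickening_iff.2 ⟨F i x, mem_range_self i, dist_comm (F i x) _ ▸ hy i⟩⟩

theorem BoundedContinuousFunction.isCompact_closure_range_iff {ι X β : Type*}
    [TopologicalSpace X] [CompactSpace X] [MetricSpace β] [ProperSpace β] {F : ι → X →ᵇ β} :
    IsCompact (closure (range F)) ↔
      (∀ x, IsBounded (range fun i => F i x)) ∧ Equicontinuous fun i => ⇑(F i) := by
  refine ⟨fun h => ⟨fun x => ?_, equicontinuous_of_totallyBounded_range
    (h.totallyBounded.subset subset_closure)⟩, fun ⟨hb, hF⟩ => ?_⟩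
  · refine (h.image (continuous_eval_const x)).isBounded.subset ?_
    rintro _ ⟨i, rfl⟩
    exact mem_image_of_mem _ (subset_closure (mem_range_self i))
  · have hrange : Equicontinuous ((↑) : range F → X → β) := by
      convert hF.comp (rangeSplitting F) with f
      exact congrArg DFunLike.coe (apply_rangeSplitting F f).symm
    refine arzela_ascoli _ (hF.isBounded_iUnion_range hb).isCompact_closure _ ?_ hrange
    rintro _ x ⟨i, rfl⟩
    exact subset_closure (mem_iUnion.2 ⟨i, x, rfl⟩)

section DenseRange

variable {ι T K α : Type*} [TopologicalSpace K] [PseudoMetricSpace α] {φ : T → K}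
  {G : ι → K → α}

theorem DenseRange.equicontinuousAt_iff (hφ : DenseRange φ) (hG : ∀ i, Continuous (G i))
    {u : K} : EquicontinuousAt G u ↔ ∀ ε > 0, ∃ W, IsOpen W ∧ u ∈ W ∧
      ∀ i t, φ t ∈ W → dist (G i (φ t)) (G i u) < ε := by
  rw [equicontinuousAt_iff_right]
  refine ⟨fun h ε hε => ?_, fun h ε hε => ?_⟩
  · obtain ⟨W, hWsub, hWo, huW⟩ := mem_nhds_iff.1 (h ε hε)
    exact ⟨W, hWo, huW, fun i t ht => dist_comm (G i u) _ ▸ hWsub ht i⟩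
  · obtain ⟨W, hWo, huW, hW⟩ := h (ε / 2) (half_pos hε)
    filter_upwards [hWo.mem_nhds huW] with v hv i
    have hclosed : IsClosed {v | dist (G i v) (G i u) ≤ ε / 2} :=
      isClosed_le ((hG i).dist continuous_const) continuous_const
    have hWle : W ⊆ {v | dist (G i v) (G i u) ≤ ε / 2} :=
      (hφ.subset_closure_image_preimage_of_isOpen hWo).trans <|
        closure_minimal (by rintro _ ⟨t, ht, rfl⟩; exact (hW i t ht).le) hclosed
    rw [dist_comm]
    exact (hWle hv).trans_lt (half_lt_self hε)

theorem DenseRange.forall_isBounded_range_iff (hφ : DenseRange φ) (hG : Equicontinuous G) :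
    (∀ u, IsBounded (range fun i => G i u)) ↔ ∀ t, IsBounded (range fun i => G i (φ t)) := by
  refine ⟨fun h t => h (φ t), fun h u => ?_⟩
  obtain ⟨_, ⟨t, rfl⟩, ht⟩ :=
    hφ.inter_nhds_nonempty (equicontinuousAt_iff_right.1 (hG u) 1 one_pos)
  refine ((h t).thickening (δ := 1)).subset (range_subset_iff.2 fun i => ?_)
  exact mem_thickening_iff.2 ⟨_, mem_range_self i, ht i⟩

end DenseRange

theorem arzelaAscoli_wallman_general {T : Type*} [TopologicalSpace T]
    (hat : BoundedContinuousFunction T ℂ → C(StoneCech T, ℂ))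
    (hhat : ∀ f : BoundedContinuousFunction T ℂ, ∀ t : T, hat f (stoneCechUnit t) = f t)
    (ℱ : Set (BoundedContinuousFunction T ℂ)) :
    IsCompact (closure ℱ) ↔
      ((∀ t : T, Bornology.IsBounded ((fun f : BoundedContinuousFunction T ℂ => f t) '' ℱ)) ∧
       (∀ ε : ℝ, 0 < ε → ∀ u : StoneCech T, ∃ W : Set (StoneCech T), IsOpen W ∧ u ∈ W ∧
          ∀ f ∈ ℱ, ∀ t : T, stoneCechUnit t ∈ W → ‖f t - hat f u‖ < ε)) := by
  set E : (T →ᵇ ℂ) → (StoneCech T →ᵇ ℂ) := fun f => mkOfCompact (hat f)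
  have hE : Isometry E := denseRange_stoneCechUnit.isometry_of_extension hhat
  rw [← hE.isUniformInducing.isCompact_closure_image_iff, image_eq_range,
    isCompact_closure_range_iff,
    and_congr_left fun hG => denseRange_stoneCechUnit.forall_isBounded_range_iff hG]
  refine and_congr (forall_congr' fun t => ?_) ?_
  · simp only [E, mkOfCompact_apply, hhat, image_eq_range]
  · have hG (u : StoneCech T) : EquicontinuousAt (fun f : ℱ => ⇑(E f)) u ↔ ∀ ε > 0,
        ∃ W, IsOpen W ∧ u ∈ W ∧ ∀ f ∈ ℱ, ∀ t, stoneCechUnit t ∈ W → ‖f t - hat f u‖ < ε := by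
      rw [denseRange_stoneCechUnit.equicontinuousAt_iff fun f : ℱ => (E f).continuous]
      simp only [E, mkOfCompact_apply, hhat, dist_eq_norm, Subtype.forall]
    simp only [Equicontinuous, hG]
    exact ⟨fun h ε hε u => h u ε hε, fun h u ε hε => h ε hε u⟩

/-- **Arzelà–Ascoli theorem via the Wallman/Stone–Čech compactification.**
Here `hat f : C(βT, ℂ)` denotes the (necessarily unique, by density) continuous
extension of `f ∈ C^b(T)` to the Stone–Čech compactification `βT`.
A family `ℱ ⊆ C^b(T)` is relatively compact iff it is pointwise bounded (AA1) and
ω-equicontinuous (AA2). -/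
theorem arzelaAscoli_wallman {T : Type*} [TopologicalSpace T] [T35Space T]
    (hat : BoundedContinuousFunction T ℂ → C(StoneCech T, ℂ))
    (hhat : ∀ f : BoundedContinuousFunction T ℂ, ∀ t : T, hat f (stoneCechUnit t) = f t)
    (ℱ : Set (BoundedContinuousFunction T ℂ)) :
    IsCompact (closure ℱ) ↔
      ((∀ t : T, Bornology.IsBounded ((fun f : BoundedContinuousFunction T ℂ => f t) '' ℱ)) ∧
       (∀ ε : ℝ, 0 < ε → ∀ u : StoneCech T, ∃ W : Set (StoneCech T), IsOpen W ∧ u ∈ W ∧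
          ∀ f ∈ ℱ, ∀ t : T, stoneCechUnit t ∈ W → ‖f t - hat f u‖ < ε)) :=
  arzelaAscoli_wallman_general hat hhat ℱ
end

section
/- Let T be a Tychonoff (T3.5) topological space. The functional ω : 𝒫(C^b(T)) → [0,∞] satisfies: (MN2) if ℱ ⊆ 𝒢 ⊆ C^b(T) then ω(ℱ) ≤ ω(𝒢); (MN3) ω(cl ℱ) = ω(ℱ), where cl is closure in the supremum norm on C^b(T); (MN4) ω(λ·ℱ) = |λ|·ω(ℱ) for every λ ∈ ℂ; (MN5) ω(ℱ ∪ 𝒢) = ω(ℱ) for every finite 𝒢 ⊆ C^b(T); (MN6) ω(convexHull ℱ) = ω(ℱ). -/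
open BoundedContinuousFunction ENNReal Pointwise Set

variable {T : Type*} [TopologicalSpace T]

/-- `ω^u(ℱ, W) := sup { |f̂(u) − f(t)| : f ∈ ℱ, t ∈ T, φ(t) ∈ W } ∈ [0,∞]`, where
`hat f = f̂` is the continuous extension of `f` to the Stone–Čech compactification. -/
noncomputable def omegaUW (hat : BoundedContinuousFunction T ℂ → C(StoneCech T, ℂ))
    (ℱ : Set (BoundedContinuousFunction T ℂ)) (u : StoneCech T) (W : Set (StoneCech T)) :
    ℝ≥0∞ :=
  ⨆ f ∈ ℱ, ⨆ t ∈ (stoneCechUnit ⁻¹' W : Set T), (‖hat f u - f t‖₊ : ℝ≥0∞)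

/-- `ω^u(ℱ) := inf { ω^u(ℱ, W) : W ⊆ βT open, u ∈ W }`. -/
noncomputable def omegaU (hat : BoundedContinuousFunction T ℂ → C(StoneCech T, ℂ))
    (ℱ : Set (BoundedContinuousFunction T ℂ)) (u : StoneCech T) : ℝ≥0∞ :=
  ⨅ (W : Set (StoneCech T)) (_ : IsOpen W ∧ u ∈ W), omegaUW hat ℱ u W

/-- `ω(ℱ) := sup_{u ∈ βT} ω^u(ℱ)`, the measure of non-ω-equicontinuity. -/
noncomputable def omegaMeasure (hat : BoundedContinuousFunction T ℂ → C(StoneCech T, ℂ))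
    (ℱ : Set (BoundedContinuousFunction T ℂ)) : ℝ≥0∞ :=
  ⨆ u : StoneCech T, omegaU hat ℱ u

/-!
Because `φ(T)` is dense in `βT`, the extension `f ↦ f̂` is linear and `‖f̂(u)‖ ≤ ‖f‖`, so for
fixed `u` and `t` the deviation `f ↦ f̂(u) - f(t)` is a continuous linear functional on `C^b(T)`.
Hence `ω^u(ℱ, W) ≤ c` cuts out a closed convex set of functions, which gives (MN3) and (MN6)
already for `ω^u(·, W)`, and homogeneity of the deviation gives (MN4). For (MN5), `ω^u` of a
single function vanishes by continuity of `f̂` at `u`, and `ω^u(ℱ ∪ 𝒢) ≤ max (ω^u ℱ) (ω^u 𝒢)`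
by intersecting neighbourhoods.
-/

open Set

theorem convex_setOf_coe_nnnorm_le {F : Type*} [SeminormedAddCommGroup F] [NormedSpace ℝ F]
    (c : ℝ≥0∞) : Convex ℝ {x : F | (‖x‖₊ : ℝ≥0∞) ≤ c} := by
  induction c using ENNReal.recTopCoe with
  | top => simpa only [le_top, ofPred_true] using convex_univ
  | coe c =>
    convert convex_closedBall (0 : F) c using 1
    ext x
    simp [← NNReal.coe_le_coe]

section

variable {hat : (T →ᵇ ℂ) → C(StoneCech T, ℂ)} {ℱ 𝒢 : Set (T →ᵇ ℂ)} {u : StoneCech T}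
  {W W₁ W₂ : Set (StoneCech T)}

theorem omegaUW_le_iff {c : ℝ≥0∞} :
    omegaUW hat ℱ u W ≤ c ↔ ∀ f ∈ ℱ, ∀ t, stoneCechUnit t ∈ W → (‖hat f u - f t‖₊ : ℝ≥0∞) ≤ c := by
  simp only [omegaUW, iSup₂_le_iff, mem_preimage]

theorem omegaUW_le_iff_subset {c : ℝ≥0∞} :
    omegaUW hat ℱ u W ≤ c ↔ ℱ ⊆ {f | omegaUW hat {f} u W ≤ c} := by
  simp only [omegaUW_le_iff, mem_singleton_iff, forall_eq, subset_def, mem_ofPred_eq]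

theorem omegaUW_mono_left (h : ℱ ⊆ 𝒢) : omegaUW hat ℱ u W ≤ omegaUW hat 𝒢 u W :=
  biSup_mono h

theorem omegaUW_mono_right (h : W₁ ⊆ W₂) : omegaUW hat ℱ u W₁ ≤ omegaUW hat ℱ u W₂ :=
  iSup₂_mono fun _ _ => biSup_mono fun _ => @h _

theorem omegaUW_union : omegaUW hat (ℱ ∪ 𝒢) u W = omegaUW hat ℱ u W ⊔ omegaUW hat 𝒢 u W :=
  iSup_union

theorem omegaU_le (hW : IsOpen W) (hu : u ∈ W) : omegaU hat ℱ u ≤ omegaUW hat ℱ u W :=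
  iInf₂_le W ⟨hW, hu⟩

theorem omegaU_eq_iInf_subtype :
    omegaU hat ℱ u = ⨅ W : {W : Set (StoneCech T) // IsOpen W ∧ u ∈ W}, omegaUW hat ℱ u W :=
  iInf_subtype'

theorem omegaU_lt_iff {c : ℝ≥0∞} :
    omegaU hat ℱ u < c ↔ ∃ W, IsOpen W ∧ u ∈ W ∧ omegaUW hat ℱ u W < c := by
  simp only [omegaU, iInf_lt_iff, exists_prop, and_assoc]

theorem omegaU_union_le : omegaU hat (ℱ ∪ 𝒢) u ≤ omegaU hat ℱ u ⊔ omegaU hat 𝒢 u := by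
  refine le_of_forall_gt fun c hc => ?_
  obtain ⟨W₁, hW₁, hu₁, h₁⟩ := omegaU_lt_iff.1 (le_sup_left.trans_lt hc)
  obtain ⟨W₂, hW₂, hu₂, h₂⟩ := omegaU_lt_iff.1 (le_sup_right.trans_lt hc)
  calc omegaU hat (ℱ ∪ 𝒢) u ≤ omegaUW hat (ℱ ∪ 𝒢) u (W₁ ∩ W₂) :=
        omegaU_le (hW₁.inter hW₂) ⟨hu₁, hu₂⟩
    _ = omegaUW hat ℱ u (W₁ ∩ W₂) ⊔ omegaUW hat 𝒢 u (W₁ ∩ W₂) := omegaUW_union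
    _ ≤ omegaUW hat ℱ u W₁ ⊔ omegaUW hat 𝒢 u W₂ :=
        sup_le_sup (omegaUW_mono_right inter_subset_left) (omegaUW_mono_right inter_subset_right)
    _ < c := max_lt h₁ h₂

theorem omegaMeasure_mono (h : ℱ ⊆ 𝒢) : omegaMeasure hat ℱ ≤ omegaMeasure hat 𝒢 :=
  iSup_mono fun _ => iInf₂_mono fun _ _ => omegaUW_mono_left h

theorem omegaMeasure_congr (h : ∀ u W, omegaUW hat ℱ u W = omegaUW hat 𝒢 u W) :
    omegaMeasure hat ℱ = omegaMeasure hat 𝒢 := by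
  simp only [omegaMeasure, omegaU, h]

variable (hhat : ∀ f : T →ᵇ ℂ, ∀ t : T, hat f (stoneCechUnit t) = f t)
include hhat

theorem hat_eq_of_apply_stoneCechUnit {f : T →ᵇ ℂ} {g : C(StoneCech T, ℂ)}
    (hg : ∀ t, g (stoneCechUnit t) = f t) : hat f = g :=
  ContinuousMap.coe_injective <| stoneCech_hom_ext (map_continuous _) (map_continuous _) <|
    funext fun t => (hhat f t).trans (hg t).symm

theorem hat_add (f g : T →ᵇ ℂ) : hat (f + g) = hat f + hat g :=
  hat_eq_of_apply_stoneCechUnit hhat fun t => by simp [hhat]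

theorem hat_smul (c : ℂ) (f : T →ᵇ ℂ) : hat (c • f) = c • hat f :=
  hat_eq_of_apply_stoneCechUnit hhat fun t => by simp [hhat]

theorem norm_hat_apply_le (f : T →ᵇ ℂ) (u : StoneCech T) : ‖hat f u‖ ≤ ‖f‖ :=
  denseRange_stoneCechUnit.induction_on u (isClosed_le (by fun_prop) continuous_const)
    fun t => (hhat f t).symm ▸ f.norm_coe_le_norm t

noncomputable def hatEvalCLM (u : StoneCech T) : (T →ᵇ ℂ) →L[ℂ] ℂ :=
  LinearMap.mkContinuous
    { toFun := fun f => hat f u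
      map_add' := fun f g => by simp [hat_add hhat]
      map_smul' := fun c f => by simp [hat_smul hhat] }
    1 fun f => by simpa using norm_hat_apply_le hhat f u

noncomputable def deviationCLM (u : StoneCech T) (t : T) : (T →ᵇ ℂ) →L[ℂ] ℂ :=
  hatEvalCLM hhat u - evalCLM ℂ t

theorem deviationCLM_apply (u : StoneCech T) (t : T) (f : T →ᵇ ℂ) :
    deviationCLM hhat u t f = hat f u - f t :=
  rfl

theorem omegaUW_singleton (f : T →ᵇ ℂ) :
    omegaUW hat {f} u W =
      ⨆ t ∈ stoneCechUnit ⁻¹' W, (‖deviationCLM hhat u t f‖₊ : ℝ≥0∞) := by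
  simp [omegaUW, deviationCLM_apply]

theorem isClosed_setOf_omegaUW_singleton_le (c : ℝ≥0∞) :
    IsClosed {f | omegaUW hat {f} u W ≤ c} := by
  simp only [omegaUW_singleton hhat]
  refine (lowerSemicontinuous_biSup fun t _ => ?_).isClosed_preimage c
  exact Continuous.lowerSemicontinuous (by fun_prop)

theorem convex_setOf_omegaUW_singleton_le (c : ℝ≥0∞) :
    Convex ℝ {f | omegaUW hat {f} u W ≤ c} := by
  simp only [omegaUW_singleton hhat, iSup₂_le_iff, ofPred_forall]
  exact convex_iInter₂ fun t _ =>
    (convex_setOf_coe_nnnorm_le c).linear_preimage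
      ((deviationCLM hhat u t).toLinearMap.restrictScalars ℝ)

theorem omegaUW_closure : omegaUW hat (closure ℱ) u W = omegaUW hat ℱ u W :=
  le_antisymm
    (omegaUW_le_iff_subset.2 <| closure_minimal (omegaUW_le_iff_subset.1 le_rfl)
      (isClosed_setOf_omegaUW_singleton_le hhat _))
    (omegaUW_mono_left subset_closure)

theorem omegaUW_convexHull : omegaUW hat (convexHull ℝ ℱ) u W = omegaUW hat ℱ u W :=
  le_antisymm
    (omegaUW_le_iff_subset.2 <| convexHull_min (omegaUW_le_iff_subset.1 le_rfl)
      (convex_setOf_omegaUW_singleton_le hhat _))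
    (omegaUW_mono_left (subset_convexHull ℝ ℱ))

theorem omegaUW_smul (l : ℂ) :
    omegaUW hat (l • ℱ) u W = (‖l‖₊ : ℝ≥0∞) * omegaUW hat ℱ u W := by
  have hdev : ∀ f t, hat (l • f) u - (l • f) t = l • (hat f u - f t) := fun f t =>
    map_smul (deviationCLM hhat u t) l f
  simp only [omegaUW, ← image_smul, iSup_image, hdev, nnnorm_smul, ENNReal.coe_mul,
    ENNReal.mul_iSup]

theorem omegaU_smul (l : ℂ) : omegaU hat (l • ℱ) u = (‖l‖₊ : ℝ≥0∞) * omegaU hat ℱ u := by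
  -- over the subtype the infimum is nonempty, so it commutes with the finite factor even if `l = 0`
  have : Nonempty {W : Set (StoneCech T) // IsOpen W ∧ u ∈ W} := ⟨⟨univ, isOpen_univ, mem_univ u⟩⟩
  simp only [omegaU_eq_iInf_subtype, omegaUW_smul hhat,
    ENNReal.mul_iInf fun h => absurd h ENNReal.coe_ne_top]

theorem omegaMeasure_smul (l : ℂ) :
    omegaMeasure hat (l • ℱ) = (‖l‖₊ : ℝ≥0∞) * omegaMeasure hat ℱ := by
  simp only [omegaMeasure, omegaU_smul hhat, ENNReal.mul_iSup]

theorem omegaU_singleton (f : T →ᵇ ℂ) : omegaU hat {f} u = 0 := by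
  refine nonpos_iff_eq_zero.1 (ENNReal.le_of_forall_pos_le_add fun ε hε _ => ?_)
  rw [zero_add]
  have hW : IsOpen (hat f ⁻¹' Metric.eball (hat f u) ε) :=
    Metric.isOpen_eball.preimage (map_continuous _)
  refine (omegaU_le hW (Metric.mem_eball_self (by simpa using hε))).trans
    (omegaUW_le_iff.2 ?_)
  rintro _ rfl t ht
  rw [← hhat, ← enorm_eq_nnnorm, ← edist_eq_enorm_sub, edist_comm]
  exact ht.le

theorem omegaU_of_finite (h𝒢 : 𝒢.Finite) : omegaU hat 𝒢 u = 0 := by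
  induction 𝒢, h𝒢 using Set.Finite.induction_on with
  | empty =>
    exact nonpos_iff_eq_zero.1 ((omegaU_le isOpen_univ (mem_univ u)).trans (by simp [omegaUW]))
  | insert _ _ ih =>
    rw [insert_eq]
    exact nonpos_iff_eq_zero.1 (omegaU_union_le.trans (by simp [omegaU_singleton hhat, ih]))

theorem omegaMeasure_union_of_finite (h𝒢 : 𝒢.Finite) :
    omegaMeasure hat (ℱ ∪ 𝒢) = omegaMeasure hat ℱ :=
  le_antisymm
    (iSup_mono fun _ => omegaU_union_le.trans_eq (by rw [omegaU_of_finite hhat h𝒢, max_zero]))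
    (omegaMeasure_mono subset_union_left)

end

theorem omega_satisfies_MN2_to_MN6_general
    (hat : BoundedContinuousFunction T ℂ → C(StoneCech T, ℂ))
    (hhat : ∀ f : BoundedContinuousFunction T ℂ, ∀ t : T, hat f (stoneCechUnit t) = f t) :
    (∀ ℱ 𝒢 : Set (BoundedContinuousFunction T ℂ), ℱ ⊆ 𝒢 →
      omegaMeasure hat ℱ ≤ omegaMeasure hat 𝒢) ∧
    (∀ ℱ : Set (BoundedContinuousFunction T ℂ),
      omegaMeasure hat (closure ℱ) = omegaMeasure hat ℱ) ∧
    (∀ (l : ℂ) (ℱ : Set (BoundedContinuousFunction T ℂ)),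
      omegaMeasure hat (l • ℱ) = (‖l‖₊ : ℝ≥0∞) * omegaMeasure hat ℱ) ∧
    (∀ ℱ 𝒢 : Set (BoundedContinuousFunction T ℂ), 𝒢.Finite →
      omegaMeasure hat (ℱ ∪ 𝒢) = omegaMeasure hat ℱ) ∧
    (∀ ℱ : Set (BoundedContinuousFunction T ℂ),
      omegaMeasure hat (convexHull ℝ ℱ) = omegaMeasure hat ℱ) :=
  ⟨fun _ _ => omegaMeasure_mono,
    fun _ => omegaMeasure_congr fun _ _ => omegaUW_closure hhat,
    fun l _ => omegaMeasure_smul hhat l,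
    fun _ _ => omegaMeasure_union_of_finite hhat,
    fun _ => omegaMeasure_congr fun _ _ => omegaUW_convexHull hhat⟩

/-- The functional `ω` satisfies the measure-of-non-compactness axioms (MN2)–(MN6)
on `𝒫(C^b(T))` (with the supremum norm on `C^b(T)`). -/
theorem omega_satisfies_MN2_to_MN6 [T35Space T]
    (hat : BoundedContinuousFunction T ℂ → C(StoneCech T, ℂ))
    (hhat : ∀ f : BoundedContinuousFunction T ℂ, ∀ t : T, hat f (stoneCechUnit t) = f t) :
    (∀ ℱ 𝒢 : Set (BoundedContinuousFunction T ℂ), ℱ ⊆ 𝒢 →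
      omegaMeasure hat ℱ ≤ omegaMeasure hat 𝒢) ∧
    (∀ ℱ : Set (BoundedContinuousFunction T ℂ),
      omegaMeasure hat (closure ℱ) = omegaMeasure hat ℱ) ∧
    (∀ (l : ℂ) (ℱ : Set (BoundedContinuousFunction T ℂ)),
      omegaMeasure hat (l • ℱ) = (‖l‖₊ : ℝ≥0∞) * omegaMeasure hat ℱ) ∧
    (∀ ℱ 𝒢 : Set (BoundedContinuousFunction T ℂ), 𝒢.Finite →
      omegaMeasure hat (ℱ ∪ 𝒢) = omegaMeasure hat ℱ) ∧
    (∀ ℱ : Set (BoundedContinuousFunction T ℂ),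
      omegaMeasure hat (convexHull ℝ ℱ) = omegaMeasure hat ℱ) :=
  omega_satisfies_MN2_to_MN6_general hat hhat
end

section
/- Let ℱ := { x ↦ xⁿ : n ∈ ℕ, n ≥ 1 } ⊆ C([0,1], ℝ). Then the Hausdorff measure of non-compactness of ℱ equals 1/2; that is, inf { ε > 0 : there exists a finite set G ⊆ C([0,1], ℝ) such that for every n ≥ 1 there is g ∈ G with ‖(x ↦ xⁿ) − g‖_∞ ≤ ε } = 1/2. -/
/-!
The constant `1/2` lies within `1/2` of every `xⁿ`. Conversely, for fixed `n` we have
`‖xⁿ - xᵐ‖ → 1` as `m → ∞` (evaluate at a point `t < 1` with `tⁿ` close to `1`, where `tᵐ → 0`).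
If finitely many `ε`-balls cover the monomials, one ball contains infinitely many of them, hence
two that are almost `1` apart, so `2ε ≥ 1`.
-/

/-- The function `x ↦ xⁿ` as an element of `C([0,1], ℝ)`. -/
noncomputable def monomial (n : ℕ) : C(Set.Icc (0 : ℝ) 1, ℝ) :=
  ⟨fun x => (x : ℝ) ^ n, by fun_prop⟩

open Filter Topology

@[simp]
theorem monomial_apply (n : ℕ) (x : Set.Icc (0 : ℝ) 1) : monomial n x = (x : ℝ) ^ n := rfl

theorem le_two_mul_of_finset_cover {E : Type*} [PseudoMetricSpace E]
    {f : ℕ → E} {c ε : ℝ} (hsep : ∀ n, ∀ c' < c, ∀ᶠ m in atTop, c' ≤ dist (f n) (f m))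
    (G : Finset E) (hG : ∀ n, ∃ g ∈ G, dist (f n) g ≤ ε) : c ≤ 2 * ε := by
  choose g hgG hg using hG
  obtain ⟨y, hy⟩ := Finite.exists_infinite_fiber fun n => (⟨g n, hgG n⟩ : G)
  have hfiber : {n | g n = y}.Infinite := by
    simpa [Set.infinite_coe_iff, Set.preimage, Subtype.ext_iff] using hy
  obtain ⟨n, hn : g n = y⟩ := hfiber.nonempty
  refine le_of_forall_lt_imp_le_of_dense fun c' hc' => ?_
  obtain ⟨m, hnm, hm⟩ :=
    ((hsep n c' hc').and_frequently (Nat.frequently_atTop_iff_infinite.2 hfiber)).exists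
  calc c' ≤ dist (f n) (f m) := hnm
    _ ≤ dist (f n) y + dist (f m) y := dist_triangle_right _ _ _
    _ ≤ 2 * ε := by linarith [hn ▸ hg n, (hm : g m = y) ▸ hg m]

theorem norm_monomial_sub_const_half_le (n : ℕ) :
    ‖monomial n - ContinuousMap.const _ (1 / 2)‖ ≤ 1 / 2 := by
  refine (ContinuousMap.norm_le _ (by norm_num)).2 fun x => ?_
  have hxn : (x : ℝ) ^ n ≤ 1 := pow_le_one₀ x.2.1 x.2.2
  have : 0 ≤ (x : ℝ) ^ n := pow_nonneg x.2.1 n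
  simp only [ContinuousMap.sub_apply, ContinuousMap.const_apply, monomial_apply,
    Real.norm_eq_abs, abs_le]
  constructor <;> linarith

theorem eventually_le_norm_monomial_sub (n : ℕ) {c : ℝ} (hc : c < 1) :
    ∀ᶠ m in atTop, c ≤ ‖monomial n - monomial m‖ := by
  have hpow : Tendsto (fun t : ℝ => t ^ n) (𝓝[<] 1) (𝓝 1) := by
    simpa using ((continuous_pow (M := ℝ) n).tendsto 1).mono_left nhdsWithin_le_nhds
  obtain ⟨t, htn, ht0, ht1⟩ :=
    ((hpow.eventually (lt_mem_nhds hc)).and (Ioo_mem_nhdsLT (zero_lt_one' ℝ))).exists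
  have htm : ∀ᶠ m in atTop, t ^ m < t ^ n - c :=
    (tendsto_pow_atTop_nhds_zero_of_lt_one ht0.le ht1).eventually (gt_mem_nhds (by linarith))
  filter_upwards [htm] with m hm
  have := ContinuousMap.norm_coe_le_norm (monomial n - monomial m) ⟨t, ht0.le, ht1.le⟩
  simp only [ContinuousMap.sub_apply, monomial_apply, Real.norm_eq_abs] at this
  linarith [le_abs_self (t ^ n - t ^ m)]

/-- The Hausdorff measure of non-compactness of the family
`ℱ = {x ↦ xⁿ : n ≥ 1} ⊆ C([0,1], ℝ)` equals `1/2`. -/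
theorem hausdorff_mnc_of_monomials :
    sInf {ε : ℝ | 0 < ε ∧ ∃ G : Finset C(Set.Icc (0 : ℝ) 1, ℝ),
      ∀ n : ℕ, 1 ≤ n → ∃ g ∈ G, ‖monomial n - g‖ ≤ ε} = 1 / 2 := by
  refine IsLeast.csInf_eq ⟨⟨by norm_num, {ContinuousMap.const _ (1 / 2)}, fun n _ =>
    ⟨_, Finset.mem_singleton_self _, norm_monomial_sub_const_half_le n⟩⟩, ?_⟩
  rintro ε ⟨-, G, hG⟩
  have hsep : ∀ n, ∀ c < 1, ∀ᶠ m in atTop,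
      c ≤ dist (monomial (n + 1)) (monomial (m + 1)) := fun n c hc => by
    simpa only [dist_eq_norm] using
      (tendsto_add_atTop_nat 1).eventually (eventually_le_norm_monomial_sub (n + 1) hc)
  have hcover : ∀ n, ∃ g ∈ G, dist (monomial (n + 1)) g ≤ ε := fun n => by
    simpa only [dist_eq_norm] using hG (n + 1) (Nat.le_add_left 1 n)
  linarith [le_two_mul_of_finset_cover hsep G hcover]
end
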